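/- Let (Ω, F, P) be a probability space, ρ ∈ (0,1), α > 0. Let v_t : Ω → ℝ (t ∈ ℕ₀) be nonnegative random variables and let k_n : Ω → ℕ₀ (n ∈ ℕ₀) be random variables such that almost surely (k_n) is strictly increasing with k_0 = 0 and (v_t) is a cycle-Lyapunov sequence for (ρ, α, (k_n)). Suppose v_0 is independent of the σ-algebra generated by (Δ_n)_{n≥1}, that E[v_0] < ∞, and that Σ_{n=0}^{∞} E[Ξ(n)] < ∞. Then Σ_{t=0}^{∞} E[v_t] ≤ (1 + α/(1−ρ)) · E[v_0] · Σ_{n=0}^{∞} E[Ξ(n)] < ∞. -/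

import Mathlib

open MeasureTheory
open scoped ENNReal

/-- `v : ℕ → ℝ` is a cycle-Lyapunov sequence for `(ρ, α, k)`: it is nonnegative, satisfies
`v (k n + 1) ≤ α * v (k n)` at the start of each cycle, and contracts by `ρ` at every step
`t` with `k n + 1 ≤ t ≤ k (n+1) - 1` within a cycle. -/
def IsCycleLyapunov (ρ α : ℝ) (k : ℕ → ℕ) (v : ℕ → ℝ) : Prop :=
  (∀ t, 0 ≤ v t) ∧
  (∀ n, v (k n + 1) ≤ α * v (k n)) ∧
  (∀ n t, k n + 1 ≤ t → t < k (n + 1) → v (t + 1) ≤ ρ * v t)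

/-- `Ξ(n) = α^n · ρ^{Σ_{i=1}^{n} (Δ_i − 1)}` where `Δ_i = k i − k (i−1)`; in particular
`Ξ(0) = 1` (empty sum). -/
noncomputable def Xi (ρ α : ℝ) (k : ℕ → ℕ) (n : ℕ) : ℝ :=
  α ^ n * ρ ^ (∑ i ∈ Finset.range n, (k (i + 1) - k i - 1))

/-!
Within the `n`-th cycle `v` is at most `α v(kₙ)` one step after `kₙ` and then decays
geometrically, so the cycle contributes at most `(1 + α / (1 - ρ)) v(kₙ)`; chaining the cycles
gives `v(kₙ) ≤ Ξ(n) v(0)`. This bounds `∑ₜ vₜ` pathwise by `(1 + α / (1 - ρ)) v₀ ∑ₙ Ξ(n)`, and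
since `Ξ(n)` is a function of the increments `Δᵢ`, independence factors the expectation of the
right-hand side.
-/

open Finset

lemma Xi_nonneg {ρ α : ℝ} (hρ : 0 ≤ ρ) (hα : 0 ≤ α) (k : ℕ → ℕ) (n : ℕ) : 0 ≤ Xi ρ α k n := by
  unfold Xi; positivity

lemma Xi_succ (ρ α : ℝ) (k : ℕ → ℕ) (n : ℕ) :
    Xi ρ α k (n + 1) = α * ρ ^ (k (n + 1) - k n - 1) * Xi ρ α k n := by
  simp only [Xi, sum_range_succ, pow_add, pow_succ]
  ring

lemma measurable_Xi_iSup_comap {Ω : Type*} (ρ α : ℝ) (k : ℕ → Ω → ℕ) (n : ℕ) :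
    Measurable[⨆ i : ℕ, MeasurableSpace.comap (fun ω => k (i + 1) ω - k i ω) inferInstance]
      fun ω => Xi ρ α (fun j => k j ω) n :=
  (measurable_from_nat (f := fun s => α ^ n * ρ ^ s)).comp <|
    measurable_sum _ fun i _ =>
      ((comap_measurable fun ω => k (i + 1) ω - k i ω).mono (le_iSup_of_le i le_rfl)
        le_rfl).sub measurable_const

lemma measurable_tsum_ofReal_Xi_iSup_comap {Ω : Type*} (ρ α : ℝ) (k : ℕ → Ω → ℕ) :
    Measurable[⨆ i : ℕ, MeasurableSpace.comap (fun ω => k (i + 1) ω - k i ω) inferInstance]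
      fun ω => ∑' n, ENNReal.ofReal (Xi ρ α (fun j => k j ω) n) :=
  -- `Measurable.tsum` reads the σ-algebra on `Ω` from the instance context.
  let _ : MeasurableSpace Ω :=
    ⨆ i : ℕ, MeasurableSpace.comap (fun ω => k (i + 1) ω - k i ω) inferInstance
  Measurable.tsum fun n => (measurable_Xi_iSup_comap ρ α k n).ennreal_ofReal

namespace IsCycleLyapunov

variable {ρ α : ℝ} {k : ℕ → ℕ} {v : ℕ → ℝ}

lemma apply_add_le_pow_mul (hL : IsCycleLyapunov ρ α k v) (hρ : 0 ≤ ρ) (n j : ℕ)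
    (hj : k n + 1 + j ≤ k (n + 1)) : v (k n + 1 + j) ≤ ρ ^ j * (α * v (k n)) := by
  induction j with
  | zero => simpa using hL.2.1 n
  | succ j ih =>
    calc v (k n + 1 + (j + 1)) ≤ ρ * v (k n + 1 + j) :=
          hL.2.2 n (k n + 1 + j) (by omega) (by omega)
      _ ≤ ρ * (ρ ^ j * (α * v (k n))) := mul_le_mul_of_nonneg_left (ih (by omega)) hρ
      _ = ρ ^ (j + 1) * (α * v (k n)) := by ring

lemma apply_le_Xi_mul (hL : IsCycleLyapunov ρ α k v) (hρ : 0 ≤ ρ) (hα : 0 ≤ α) (hk : StrictMono k)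
    (hk0 : k 0 = 0) : ∀ n, v (k n) ≤ Xi ρ α k n * v 0
  | 0 => by simp [Xi, hk0]
  | n + 1 => by
    have hlast : k n + 1 + (k (n + 1) - k n - 1) = k (n + 1) := by
      have : k n < k (n + 1) := hk (by omega)
      omega
    calc v (k (n + 1)) ≤ ρ ^ (k (n + 1) - k n - 1) * (α * v (k n)) := by
          simpa only [hlast] using hL.apply_add_le_pow_mul hρ n _ hlast.le
      _ ≤ ρ ^ (k (n + 1) - k n - 1) * (α * (Xi ρ α k n * v 0)) := by
          gcongr; exact hL.apply_le_Xi_mul hρ hα hk hk0 n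
      _ = Xi ρ α k (n + 1) * v 0 := by rw [Xi_succ]; ring

lemma sum_Ico_le (hL : IsCycleLyapunov ρ α k v) (hρ₀ : 0 ≤ ρ) (hρ₁ : ρ < 1) (hα : 0 ≤ α)
    (hk : StrictMono k) (n : ℕ) :
    ∑ t ∈ Ico (k n) (k (n + 1)), v t ≤ (1 + α / (1 - ρ)) * v (k n) := by
  have hαv : 0 ≤ α * v (k n) := mul_nonneg hα (hL.1 _)
  have htail : ∑ t ∈ Ico (k n + 1) (k (n + 1)), v t ≤ α / (1 - ρ) * v (k n) := calc
      ∑ t ∈ Ico (k n + 1) (k (n + 1)), v t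
        = ∑ j ∈ range (k (n + 1) - (k n + 1)), v (k n + 1 + j) :=
          sum_Ico_eq_sum_range _ _ _
      _ ≤ ∑ j ∈ range (k (n + 1) - (k n + 1)), ρ ^ j * (α * v (k n)) :=
          sum_le_sum fun j hj =>
            hL.apply_add_le_pow_mul hρ₀ n j (by rw [mem_range] at hj; omega)
      _ ≤ ρ ^ 0 / (1 - ρ) * (α * v (k n)) := by
          rw [← sum_mul, range_eq_Ico]
          gcongr
          exact geom_sum_Ico_le_of_lt_one hρ₀ hρ₁
      _ = α / (1 - ρ) * v (k n) := by ring
  rw [sum_eq_sum_Ico_succ_bot (hk n.lt_succ_self)]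
  linarith

lemma sum_range_le (hL : IsCycleLyapunov ρ α k v) (hρ₀ : 0 ≤ ρ) (hρ₁ : ρ < 1) (hα : 0 ≤ α)
    (hk : StrictMono k) (hk0 : k 0 = 0) (N : ℕ) :
    ∑ t ∈ range (k N), v t ≤
      (1 + α / (1 - ρ)) * (v 0 * ∑ n ∈ range N, Xi ρ α k n) := by
  induction N with
  | zero => simp [hk0]
  | succ N ih =>
    have hC : 0 ≤ 1 + α / (1 - ρ) := by have := sub_pos.2 hρ₁; positivity
    have hcycle := (hL.sum_Ico_le hρ₀ hρ₁ hα hk N).trans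
      (mul_le_mul_of_nonneg_left (hL.apply_le_Xi_mul hρ₀ hα hk hk0 N) hC)
    rw [← sum_range_add_sum_Ico _ (hk N.lt_succ_self).le, sum_range_succ]
    linarith

lemma tsum_ofReal_le (hL : IsCycleLyapunov ρ α k v) (hρ₀ : 0 ≤ ρ) (hρ₁ : ρ < 1) (hα : 0 ≤ α)
    (hk : StrictMono k) (hk0 : k 0 = 0) :
    ∑' t, ENNReal.ofReal (v t) ≤
      ENNReal.ofReal (1 + α / (1 - ρ)) *
        (ENNReal.ofReal (v 0) * ∑' n, ENNReal.ofReal (Xi ρ α k n)) := by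
  rw [ENNReal.tsum_eq_iSup_nat' hk.tendsto_atTop]
  refine iSup_le fun N => ?_
  have hC : 0 ≤ 1 + α / (1 - ρ) := by have := sub_pos.2 hρ₁; positivity
  calc ∑ t ∈ range (k N), ENNReal.ofReal (v t)
      = ENNReal.ofReal (∑ t ∈ range (k N), v t) :=
        (ENNReal.ofReal_sum_of_nonneg fun t _ => hL.1 t).symm
    _ ≤ ENNReal.ofReal (1 + α / (1 - ρ)) *
          (ENNReal.ofReal (v 0) * ∑ n ∈ range N, ENNReal.ofReal (Xi ρ α k n)) := by
        rw [← ENNReal.ofReal_sum_of_nonneg fun n _ => Xi_nonneg hρ₀ hα k n,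
          ← ENNReal.ofReal_mul (hL.1 0), ← ENNReal.ofReal_mul hC]
        exact ENNReal.ofReal_le_ofReal (hL.sum_range_le hρ₀ hρ₁ hα hk hk0 N)
    _ ≤ _ := by gcongr; exact ENNReal.sum_le_tsum _

end IsCycleLyapunov

theorem stochastic_total_cost_bound_general
    {Ω : Type*} [MeasurableSpace Ω] (P : Measure Ω)
    (ρ α : ℝ) (hρ : ρ ∈ Set.Ioo (0 : ℝ) 1) (hα : 0 < α)
    (v : ℕ → Ω → ℝ) (k : ℕ → Ω → ℕ)
    (hvmeas : ∀ t, Measurable (v t)) (hkmeas : ∀ n, Measurable (k n))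
    (hae : ∀ᵐ ω ∂P, StrictMono (fun n => k n ω) ∧ k 0 ω = 0 ∧
      IsCycleLyapunov ρ α (fun n => k n ω) (fun t => v t ω))
    (hindep : ProbabilityTheory.Indep
      (MeasurableSpace.comap (v 0) inferInstance)
      (⨆ n : ℕ, MeasurableSpace.comap (fun ω => k (n + 1) ω - k n ω) inferInstance) P)
    (hv0 : (∫⁻ ω, ENNReal.ofReal (v 0 ω) ∂P) < ⊤)
    (hXi : (∑' n : ℕ, ∫⁻ ω, ENNReal.ofReal (Xi ρ α (fun m => k m ω) n) ∂P) < ⊤) :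
    (∑' t : ℕ, ∫⁻ ω, ENNReal.ofReal (v t ω) ∂P) ≤
      ENNReal.ofReal (1 + α / (1 - ρ)) * (∫⁻ ω, ENNReal.ofReal (v 0 ω) ∂P) *
        (∑' n : ℕ, ∫⁻ ω, ENNReal.ofReal (Xi ρ α (fun m => k m ω) n) ∂P) ∧
    (∑' t : ℕ, ∫⁻ ω, ENNReal.ofReal (v t ω) ∂P) < ⊤ := by
  have hmΔ : (⨆ n : ℕ, MeasurableSpace.comap (fun ω => k (n + 1) ω - k n ω) inferInstance) ≤
      ‹MeasurableSpace Ω› :=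
    iSup_le fun n => ((hkmeas (n + 1)).sub (hkmeas n)).comap_le
  have hmain : (∑' t, ∫⁻ ω, ENNReal.ofReal (v t ω) ∂P) ≤
      ENNReal.ofReal (1 + α / (1 - ρ)) * (∫⁻ ω, ENNReal.ofReal (v 0 ω) ∂P) *
        (∑' n, ∫⁻ ω, ENNReal.ofReal (Xi ρ α (fun m => k m ω) n) ∂P) := calc
    (∑' t, ∫⁻ ω, ENNReal.ofReal (v t ω) ∂P) = ∫⁻ ω, ∑' t, ENNReal.ofReal (v t ω) ∂P :=
        (lintegral_tsum fun t => (hvmeas t).ennreal_ofReal.aemeasurable).symm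
    _ ≤ ∫⁻ ω, ENNReal.ofReal (1 + α / (1 - ρ)) * (ENNReal.ofReal (v 0 ω) *
          ∑' n, ENNReal.ofReal (Xi ρ α (fun m => k m ω) n)) ∂P :=
        lintegral_mono_ae <| hae.mono fun ω ⟨hk, hk0, hL⟩ =>
          hL.tsum_ofReal_le hρ.1.le hρ.2 hα.le hk hk0
    _ = _ := by
        rw [lintegral_const_mul' _ _ ENNReal.ofReal_ne_top,
          ProbabilityTheory.lintegral_mul_eq_lintegral_mul_lintegral_of_independent_measurableSpace
            (hvmeas 0).comap_le hmΔ hindep (comap_measurable _).ennreal_ofReal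
            (measurable_tsum_ofReal_Xi_iSup_comap ρ α k),
          lintegral_tsum fun n =>
            ((measurable_Xi_iSup_comap ρ α k n).ennreal_ofReal.mono hmΔ le_rfl).aemeasurable,
          mul_assoc]
  exact ⟨hmain, hmain.trans_lt <|
    ENNReal.mul_lt_top (ENNReal.mul_lt_top ENNReal.ofReal_lt_top hv0) hXi⟩

theorem stochastic_total_cost_bound
    {Ω : Type*} [MeasurableSpace Ω] (P : Measure Ω) [IsProbabilityMeasure P]
    (ρ α : ℝ) (hρ : ρ ∈ Set.Ioo (0 : ℝ) 1) (hα : 0 < α)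
    (v : ℕ → Ω → ℝ) (k : ℕ → Ω → ℕ)
    (hvmeas : ∀ t, Measurable (v t)) (hkmeas : ∀ n, Measurable (k n))
    (hv0nn : ∀ t ω, 0 ≤ v t ω)
    (hae : ∀ᵐ ω ∂P, StrictMono (fun n => k n ω) ∧ k 0 ω = 0 ∧
      IsCycleLyapunov ρ α (fun n => k n ω) (fun t => v t ω))
    (hindep : ProbabilityTheory.Indep
      (MeasurableSpace.comap (v 0) inferInstance)
      (⨆ n : ℕ, MeasurableSpace.comap (fun ω => k (n + 1) ω - k n ω) inferInstance) P)
    (hv0 : (∫⁻ ω, ENNReal.ofReal (v 0 ω) ∂P) < ⊤)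
    (hXi : (∑' n : ℕ, ∫⁻ ω, ENNReal.ofReal (Xi ρ α (fun m => k m ω) n) ∂P) < ⊤) :
    (∑' t : ℕ, ∫⁻ ω, ENNReal.ofReal (v t ω) ∂P) ≤
      ENNReal.ofReal (1 + α / (1 - ρ)) * (∫⁻ ω, ENNReal.ofReal (v 0 ω) ∂P) *
        (∑' n : ℕ, ∫⁻ ω, ENNReal.ofReal (Xi ρ α (fun m => k m ω) n) ∂P) ∧
    (∑' t : ℕ, ∫⁻ ω, ENNReal.ofReal (v t ω) ∂P) < ⊤ :=
  stochastic_total_cost_bound_general P ρ α hρ hα v k hvmeas hkmeas hae hindep hv0 hXi
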